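/- Let q be a complex number with 0 < |q| < 1. Then ∑_{n=0}^∞ (q;q²)_n q^n = ∑_{n=0}^∞ (−1)^n q^{3n²+2n} (1 + q^{2n+1}). -/

import Mathlib

/-!
Write `F(t) = ∑ₙ (t;Q)ₙ tⁿ` with `Q = q²`. Splitting off the first factor and the last factor of
`(t;Q)ₙ₊₁` gives two expressions of `F(t)` through `∑ₙ (tQ;Q)ₙ tⁿ`; eliminating this auxiliary series
yields `F(t) = 1 + t - Q t³ F(tQ)`. Iterating from `t = q` along `t = q^(2k+1)` produces the partial
sums of the right-hand side, and the remainder `± q^(3N²+2N) F(q^(2N+1))` tends to zero because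
`F` is bounded on the disc `‖t‖ ≤ ‖q‖`.
-/

open Finset

/-- The finite q-shifted factorial `(a;q)_n`. -/
noncomputable def qPoch (a q : ℂ) (n : ℕ) : ℂ := ∏ j ∈ Finset.range n, (1 - a * q ^ j)

/-- The infinite q-shifted factorial `(a;q)_∞`. -/
noncomputable def qPochInf (a q : ℂ) : ℂ := ∏' j : ℕ, (1 - a * q ^ j)

open Filter Topology

section Recurrence

variable {R : Type*} [CommRing R]

theorem eq_sum_range_add_of_recurrence {a b c w : ℕ → R} (hrec : ∀ k, a k = b k - c k * a (k + 1))
    (hw0 : w 0 = 1) (hw : ∀ k, w (k + 1) = -(w k * c k)) (N : ℕ) :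
    a 0 = ∑ k ∈ range N, w k * b k + w N * a N := by
  induction N with
  | zero => simp [hw0]
  | succ N ih => rw [ih, hrec N, sum_range_succ, hw]; ring

variable [TopologicalSpace R] [IsTopologicalRing R] [T2Space R]

theorem eq_tsum_of_recurrence {a b c w : ℕ → R} (hrec : ∀ k, a k = b k - c k * a (k + 1))
    (hw0 : w 0 = 1) (hw : ∀ k, w (k + 1) = -(w k * c k)) (hsum : Summable fun k ↦ w k * b k)
    (hrem : Tendsto (fun N ↦ w N * a N) atTop (𝓝 0)) :
    a 0 = ∑' k, w k * b k := by
  have hpartial : Tendsto (fun N ↦ ∑ k ∈ range N, w k * b k) atTop (𝓝 (a 0)) := by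
    rw [← sub_zero (a 0)]
    refine (tendsto_const_nhds.sub hrem).congr fun N ↦ ?_
    rw [eq_sum_range_add_of_recurrence hrec hw0 hw N]
    ring
  exact tendsto_nhds_unique hpartial hsum.hasSum.tendsto_sum_nat

end Recurrence

section QPoch

theorem qPoch_zero (a Q : ℂ) : qPoch a Q 0 = 1 := prod_range_zero _

theorem qPoch_succ (a Q : ℂ) (n : ℕ) : qPoch a Q (n + 1) = qPoch a Q n * (1 - a * Q ^ n) :=
  prod_range_succ _ n

theorem qPoch_succ' (a Q : ℂ) (n : ℕ) : qPoch a Q (n + 1) = (1 - a) * qPoch (a * Q) Q n := by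
  rw [qPoch, prod_range_succ', pow_zero, mul_one, mul_comm, qPoch]
  congr 1
  refine prod_congr rfl fun j _ ↦ ?_
  ring

variable {Q : ℂ}

theorem norm_qPoch_le (hQ : ‖Q‖ < 1) {a : ℂ} (ha : ‖a‖ ≤ 1) (n : ℕ) :
    ‖qPoch a Q n‖ ≤ Real.exp (1 - ‖Q‖)⁻¹ := by
  have hQ0 : 0 ≤ ‖Q‖ := norm_nonneg Q
  have hfactor (j : ℕ) : ‖1 - a * Q ^ j‖ ≤ Real.exp (‖Q‖ ^ j) := calc
    ‖1 - a * Q ^ j‖ ≤ 1 + ‖a‖ * ‖Q‖ ^ j := by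
        simpa [norm_mul, norm_pow] using norm_sub_le 1 (a * Q ^ j)
    _ ≤ ‖Q‖ ^ j + 1 := by nlinarith [pow_nonneg hQ0 j]
    _ ≤ Real.exp (‖Q‖ ^ j) := Real.add_one_le_exp _
  calc ‖qPoch a Q n‖ = ∏ j ∈ range n, ‖1 - a * Q ^ j‖ := norm_prod _ _
    _ ≤ ∏ j ∈ range n, Real.exp (‖Q‖ ^ j) :=
        prod_le_prod (fun _ _ ↦ norm_nonneg _) fun j _ ↦ hfactor j
    _ = Real.exp (∑ j ∈ range n, ‖Q‖ ^ j) := (Real.exp_sum _ _).symm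
    _ ≤ Real.exp (1 - ‖Q‖)⁻¹ := by
        rw [Real.exp_le_exp, ← tsum_geometric_of_lt_one hQ0 hQ]
        exact (summable_geometric_of_lt_one hQ0 hQ).sum_le_tsum _ fun j _ ↦ pow_nonneg hQ0 j

theorem norm_qPoch_mul_pow_le (hQ : ‖Q‖ < 1) {a : ℂ} (ha : ‖a‖ ≤ 1) (t : ℂ) (n : ℕ) :
    ‖qPoch a Q n * t ^ n‖ ≤ Real.exp (1 - ‖Q‖)⁻¹ * ‖t‖ ^ n := by
  rw [norm_mul, norm_pow]
  exact mul_le_mul_of_nonneg_right (norm_qPoch_le hQ ha n) (by positivity)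

theorem summable_qPoch_mul_pow (hQ : ‖Q‖ < 1) {a t : ℂ} (ha : ‖a‖ ≤ 1) (ht : ‖t‖ < 1) :
    Summable fun n ↦ qPoch a Q n * t ^ n :=
  .of_norm_bounded ((summable_geometric_of_lt_one (norm_nonneg t) ht).mul_left _)
    (norm_qPoch_mul_pow_le hQ ha t)

end QPoch

section Series

noncomputable def qPochSeries (Q t : ℂ) : ℂ := ∑' n : ℕ, qPoch t Q n * t ^ n

variable {Q t : ℂ}

theorem norm_qPochSeries_le (hQ : ‖Q‖ < 1) (ht : ‖t‖ < 1) :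
    ‖qPochSeries Q t‖ ≤ Real.exp (1 - ‖Q‖)⁻¹ * (1 - ‖t‖)⁻¹ :=
  tsum_of_norm_bounded ((hasSum_geometric_of_lt_one (norm_nonneg t) ht).mul_left _)
    (norm_qPoch_mul_pow_le hQ ht.le t)

theorem qPochSeries_eq (hQ : ‖Q‖ < 1) (ht : ‖t‖ < 1) :
    qPochSeries Q t = 1 + t - Q * t ^ 3 * qPochSeries Q (t * Q) := by
  have htQ : ‖t * Q‖ < 1 := by
    rw [norm_mul]; exact mul_lt_one_of_nonneg_of_lt_one_left (norm_nonneg t) ht hQ.le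
  have hF := summable_qPoch_mul_pow hQ ht.le ht
  have hD := summable_qPoch_mul_pow hQ htQ.le ht
  have hF' := summable_qPoch_mul_pow hQ htQ.le htQ
  set D := ∑' n : ℕ, qPoch (t * Q) Q n * t ^ n
  have hfirst : qPochSeries Q t = 1 + (t - t ^ 2) * D := by
    rw [qPochSeries, hF.tsum_eq_zero_add, qPoch_zero, ← tsum_mul_left]
    simp only [qPoch_succ', pow_zero, mul_one]
    congr 1
    exact tsum_congr fun n ↦ by ring
  have hlast : qPochSeries Q t - D = Q * t ^ 2 * qPochSeries Q (t * Q) - t ^ 2 * D := by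
    rw [qPochSeries, qPochSeries, ← hF.tsum_sub hD, (hF.sub hD).tsum_eq_zero_add,
      ← tsum_mul_left, ← tsum_mul_left, ← (hF'.mul_left _).tsum_sub (hD.mul_left _)]
    simp only [qPoch_zero, sub_self, zero_add]
    exact tsum_congr fun n ↦ by rw [qPoch_succ', qPoch_succ]; ring
  linear_combination (1 + t) * hfirst - t * hlast

end Series

section Entry952

variable {q : ℂ}

theorem norm_pow_two_mul_add_one_le (hq : ‖q‖ ≤ 1) (k : ℕ) : ‖q ^ (2 * k + 1)‖ ≤ ‖q‖ := by
  rw [norm_pow]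
  exact pow_le_of_le_one (norm_nonneg q) hq (by omega)

theorem norm_neg_one_pow_mul_pow_quadratic_le (hq : ‖q‖ ≤ 1) (n : ℕ) :
    ‖(-1 : ℂ) ^ n * q ^ (3 * n ^ 2 + 2 * n)‖ ≤ ‖q‖ ^ n := by
  rw [norm_mul, norm_pow, norm_neg, norm_one, one_pow, one_mul, norm_pow]
  exact pow_le_pow_of_le_one (norm_nonneg q) hq (by nlinarith)

theorem summable_neg_one_pow_mul_pow_quadratic (hq : ‖q‖ < 1) :
    Summable fun n : ℕ ↦ (-1) ^ n * q ^ (3 * n ^ 2 + 2 * n) * (1 + q ^ (2 * n + 1)) := by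
  refine .of_norm_bounded ((summable_geometric_of_lt_one (norm_nonneg q) hq).mul_right 2)
    fun n ↦ ?_
  rw [norm_mul]
  gcongr
  · exact norm_neg_one_pow_mul_pow_quadratic_le hq.le n
  · have := (norm_pow_two_mul_add_one_le hq.le n).trans hq.le
    exact (norm_add_le _ _).trans (by rw [norm_one]; linarith)

theorem tendsto_neg_one_pow_mul_pow_quadratic_mul_qPochSeries (hq : ‖q‖ < 1) :
    Tendsto (fun N : ℕ ↦ (-1) ^ N * q ^ (3 * N ^ 2 + 2 * N) *
      qPochSeries (q ^ 2) (q ^ (2 * N + 1))) atTop (𝓝 0) := by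
  have hq2 : ‖q ^ 2‖ < 1 := by rw [norm_pow]; exact pow_lt_one₀ (norm_nonneg q) hq two_ne_zero
  set M := Real.exp (1 - ‖q ^ 2‖)⁻¹ * (1 - ‖q‖)⁻¹
  have hlim := (tendsto_pow_atTop_nhds_zero_of_lt_one (norm_nonneg q) hq).mul_const M
  rw [zero_mul] at hlim
  refine squeeze_zero_norm (fun N ↦ ?_) hlim
  have hodd := norm_pow_two_mul_add_one_le hq.le N
  rw [norm_mul]
  gcongr
  · exact norm_neg_one_pow_mul_pow_quadratic_le hq.le N
  · calc ‖qPochSeries (q ^ 2) (q ^ (2 * N + 1))‖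
        ≤ Real.exp (1 - ‖q ^ 2‖)⁻¹ * (1 - ‖q ^ (2 * N + 1)‖)⁻¹ :=
          norm_qPochSeries_le hq2 (hodd.trans_lt hq)
      _ ≤ M :=
          mul_le_mul_of_nonneg_left (inv_anti₀ (by linarith) (by linarith)) (Real.exp_pos _).le

end Entry952

theorem entry_952_general (q : ℂ) (hq1 : ‖q‖ < 1) :
    ∑' n : ℕ, qPoch q (q ^ 2) n * q ^ n
    = ∑' n : ℕ, (-1) ^ n * q ^ (3 * n ^ 2 + 2 * n) * (1 + q ^ (2 * n + 1)) := by
  have hq2 : ‖q ^ 2‖ < 1 := by rw [norm_pow]; exact pow_lt_one₀ (norm_nonneg q) hq1 two_ne_zero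
  have hrec (k : ℕ) : qPochSeries (q ^ 2) (q ^ (2 * k + 1))
      = (1 + q ^ (2 * k + 1)) - q ^ (6 * k + 5) * qPochSeries (q ^ 2) (q ^ (2 * (k + 1) + 1)) := by
    rw [qPochSeries_eq hq2 ((norm_pow_two_mul_add_one_le hq1.le k).trans_lt hq1)]
    ring_nf
  have hw (k : ℕ) : (-1 : ℂ) ^ (k + 1) * q ^ (3 * (k + 1) ^ 2 + 2 * (k + 1))
      = -((-1) ^ k * q ^ (3 * k ^ 2 + 2 * k) * q ^ (6 * k + 5)) := by
    ring_nf
  simpa [qPochSeries] using eq_tsum_of_recurrence hrec (by simp) hw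
    (summable_neg_one_pow_mul_pow_quadratic hq1)
    (tendsto_neg_one_pow_mul_pow_quadratic_mul_qPochSeries hq1)

/-- Entry 9.5.2 of Andrews–Berndt. -/
theorem entry_952 (q : ℂ) (hq0 : 0 < ‖q‖) (hq1 : ‖q‖ < 1) :
    ∑' n : ℕ, qPoch q (q ^ 2) n * q ^ n
    = ∑' n : ℕ, (-1) ^ n * q ^ (3 * n ^ 2 + 2 * n) * (1 + q ^ (2 * n + 1)) :=
  entry_952_general q hq1
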